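/- (Contraction of Lyapunov function under EKF update) Let P_{k+1|k} = P_{k|k-1}·(1 - K_k·C_k) + Q_k with Q_k ≥ 0, where K_k·C_k = 1/(1+φ_k) for φ_k > 0. Then for any real e, ((1 - K_k·C_k)²/P_{k+1|k})·e² ≤ (1 - 1/(1+φ_k))·e²/P_{k|k-1}, assuming P_{k|k-1} > 0. -/

import Mathlib

/-! Writing `t = 1 - K C`, the update reads `P' = P t + Q ≥ P t`, so `t² / P' ≤ t² / (P t) = t / P`;
multiplying by `e²` gives the contraction. -/

lemma sq_div_mul_add_le_div {P Q t : ℝ} (hP : 0 < P) (hQ : 0 ≤ Q) (ht : 0 ≤ t) :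
    t ^ 2 / (P * t + Q) ≤ t / P := by
  rcases ht.eq_or_lt with rfl | ht
  · simp
  calc t ^ 2 / (P * t + Q) ≤ t ^ 2 / (P * t) :=
        div_le_div_of_nonneg_left (by positivity) (by positivity) (by linarith)
    _ = t / P := by field_simp

lemma one_sub_one_div_one_add_nonneg {φ : ℝ} (hφ : 0 ≤ φ) : 0 ≤ 1 - 1 / (1 + φ) := by
  have h1φ : 0 < 1 + φ := by linarith
  rw [sub_nonneg, div_le_one h1φ]
  linarith

theorem lyapunov_contraction
    (P Q φ e KC P' : ℝ)
    (hP : 0 < P) (hQ : 0 ≤ Q) (hφ : 0 < φ)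
    (hKC : KC = 1 / (1 + φ))
    (hP' : P' = P * (1 - KC) + Q) :
    ((1 - KC) ^ 2 / P') * e ^ 2 ≤ (1 - 1 / (1 + φ)) * (e ^ 2 / P) := by
  subst hKC hP'
  set t := 1 - 1 / (1 + φ)
  have ht : 0 ≤ t := one_sub_one_div_one_add_nonneg hφ.le
  calc (t ^ 2 / (P * t + Q)) * e ^ 2 ≤ (t / P) * e ^ 2 :=
        mul_le_mul_of_nonneg_right (sq_div_mul_add_le_div hP hQ ht) (sq_nonneg e)
    _ = t * (e ^ 2 / P) := by ring
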